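/- The cost c(x₁,…,x_l) = Σᵢ σᵢ |xᵢ - x̄|² with all σᵢ > 0 is (1,l)-non-degenerate: the mixed second derivative D²_{x₁ x_l} c, as a linear map ℝⁿ → ℝⁿ, is injective (indeed it equals a nonzero scalar multiple of the identity). -/

import Mathlib

/-!
Expanding the square gives `c x = ∑ σᵢ ‖xᵢ‖² - S⁻¹ ‖∑ σₖ xₖ‖²` with `S = ∑ σₖ`, so the gradient
of `c` in the `i`-th block is `2σᵢ xᵢ - (2σᵢ / S) ∑ σₖ xₖ`. For `j ≠ i` this is affine in `xⱼ`
with linear part `-(2σᵢσⱼ / S) • id`, a nonzero multiple of the identity when all weights are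
positive.
-/

open Finset

/-- The gradient of `c` in the `i`-th block of variables, at the point `q`. -/
noncomputable def gradBlock {n l : ℕ}
    (c : (Fin l → EuclideanSpace ℝ (Fin n)) → ℝ) (i : Fin l)
    (q : Fin l → EuclideanSpace ℝ (Fin n)) : EuclideanSpace ℝ (Fin n) :=
  gradient (fun z => c (Function.update q i z)) (q i)

/-- The mixed second derivative `D²_{x_i x_j} c` at `p`, as a linear map ℝⁿ → ℝⁿ. -/
noncomputable def mixedD {n l : ℕ}
    (c : (Fin l → EuclideanSpace ℝ (Fin n)) → ℝ) (i j : Fin l)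
    (p : Fin l → EuclideanSpace ℝ (Fin n)) :
    EuclideanSpace ℝ (Fin n) →L[ℝ] EuclideanSpace ℝ (Fin n) :=
  fderiv ℝ (fun xj => gradBlock c i (Function.update p j xj)) (p j)

theorem Finset.sum_apply_update {ι α M : Type*} [Fintype ι] [DecidableEq ι] [AddCommMonoid M]
    (f : ι → α → M) (q : ι → α) (i : ι) (z : α) :
    ∑ k, f k (Function.update q i z k) = f i z + ∑ k ∈ univ.erase i, f k (q k) := by
  simp_rw [Function.apply_update f]
  rw [sum_update_of_mem (mem_univ i), sdiff_singleton_eq_erase]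

section BarycentricCost

variable {ι E : Type*} [Fintype ι] [NormedAddCommGroup E] [InnerProductSpace ℝ E]

noncomputable def barycentricCost (σ : ι → ℝ) (x : ι → E) : ℝ :=
  ∑ i, σ i * ‖x i - (∑ k, σ k)⁻¹ • ∑ k, σ k • x k‖ ^ 2

theorem barycentricCost_eq {σ : ι → ℝ} (hS : ∑ k, σ k ≠ 0) (x : ι → E) :
    barycentricCost σ x = ∑ i, σ i * ‖x i‖ ^ 2 - (∑ k, σ k)⁻¹ * ‖∑ k, σ k • x k‖ ^ 2 := by
  set S := ∑ k, σ k
  set T := ∑ k, σ k • x k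
  have expand : ∀ i, σ i * ‖x i - S⁻¹ • T‖ ^ 2
      = σ i * ‖x i‖ ^ 2 - 2 * S⁻¹ * inner ℝ (σ i • x i) T + σ i * (S⁻¹ ^ 2 * ‖T‖ ^ 2) := by
    intro i
    rw [norm_sub_sq_real, inner_smul_right, inner_smul_left, norm_smul, mul_pow, Real.norm_eq_abs,
      sq_abs]
    simp only [RCLike.conj_to_real]
    ring
  rw [barycentricCost, sum_congr rfl fun i _ => expand i, sum_add_distrib, sum_sub_distrib,
    ← mul_sum, ← sum_inner, ← sum_mul, real_inner_self_eq_norm_sq]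
  field_simp
  ring

theorem hasGradientAt_barycentricCost_update [DecidableEq ι] [CompleteSpace E] {σ : ι → ℝ}
    (hS : ∑ k, σ k ≠ 0) (q : ι → E) (i : ι) :
    HasGradientAt (fun z => barycentricCost σ (Function.update q i z))
      ((2 * σ i) • q i - (2 * σ i / ∑ k, σ k) • ∑ k, σ k • q k) (q i) := by
  set S := ∑ k, σ k
  set m := ∑ k ∈ univ.erase i, σ k • q k
  have hcost : (fun z => barycentricCost σ (Function.update q i z)) = fun z =>
      σ i * ‖z‖ ^ 2 + ∑ k ∈ univ.erase i, σ k * ‖q k‖ ^ 2 - S⁻¹ * ‖σ i • z + m‖ ^ 2 := by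
    funext z
    rw [barycentricCost_eq hS, sum_apply_update (fun k y => σ k * ‖y‖ ^ 2),
      sum_apply_update (fun k y => σ k • y)]
  have hT : σ i • q i + m = ∑ k, σ k • q k := add_sum_erase _ (fun k => σ k • q k) (mem_univ i)
  have hderiv := (((hasFDerivAt_id (𝕜 := ℝ) (q i)).norm_sq.const_mul (σ i)).add_const
    (∑ k ∈ univ.erase i, σ k * ‖q k‖ ^ 2)).sub
    ((((hasFDerivAt_id (q i)).const_smul (σ i)).add_const m).norm_sq.const_mul S⁻¹)
  rw [hcost, hasGradientAt_iff_hasFDerivAt]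
  refine hderiv.congr_fderiv ?_
  ext v
  simp [hT]
  ring

end BarycentricCost

theorem gradBlock_barycentricCost {n l : ℕ} {σ : Fin l → ℝ} (hS : ∑ k, σ k ≠ 0)
    (i : Fin l) (q : Fin l → EuclideanSpace ℝ (Fin n)) :
    gradBlock (barycentricCost σ) i q = (2 * σ i) • q i - (2 * σ i / ∑ k, σ k) • ∑ k, σ k • q k :=
  (hasGradientAt_barycentricCost_update hS q i).gradient

theorem mixedD_barycentricCost {n l : ℕ} {σ : Fin l → ℝ} (hS : ∑ k, σ k ≠ 0) {i j : Fin l}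
    (hij : i ≠ j) (p : Fin l → EuclideanSpace ℝ (Fin n)) :
    mixedD (barycentricCost σ) i j p =
      (-2 * σ i * σ j / ∑ k, σ k) • ContinuousLinearMap.id ℝ (EuclideanSpace ℝ (Fin n)) := by
  set S := ∑ k, σ k
  set m := ∑ k ∈ univ.erase j, σ k • p k
  have hgrad : (fun xj => gradBlock (barycentricCost σ) i (Function.update p j xj)) = fun xj =>
      (2 * σ i) • p i - (2 * σ i / S) • (σ j • xj + m) := by
    funext xj
    rw [gradBlock_barycentricCost hS, Function.update_of_ne hij,
      sum_apply_update (fun k y => σ k • y)]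
  have hderiv := (((hasFDerivAt_id (𝕜 := ℝ) (p j)).const_smul (σ j)).add_const m).const_smul
    (2 * σ i / S) |>.const_sub ((2 * σ i) • p i)
  rw [mixedD, hgrad]
  refine (hderiv.congr_fderiv ?_).fderiv
  ext v
  simp [smul_smul]
  ring

/-- The weighted barycentric cost is `(1,l)`-non-degenerate: `D²_{x₁ x_l} c` is
a nonzero scalar multiple of the identity, hence injective. -/
theorem stmt4 {n l : ℕ} (hl : 2 ≤ l) (σ : Fin l → ℝ) (hσ : ∀ i, 0 < σ i)
    (c : (Fin l → EuclideanSpace ℝ (Fin n)) → ℝ)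
    (hc : ∀ x, c x = ∑ i, σ i * ‖x i - (∑ k, σ k)⁻¹ • ∑ k, σ k • x k‖ ^ 2)
    (p : Fin l → EuclideanSpace ℝ (Fin n)) :
    mixedD c ⟨0, by omega⟩ ⟨l - 1, by omega⟩ p =
        (-2 * σ ⟨0, by omega⟩ * σ ⟨l - 1, by omega⟩ / ∑ k, σ k) •
          ContinuousLinearMap.id ℝ (EuclideanSpace ℝ (Fin n)) ∧
      -2 * σ ⟨0, by omega⟩ * σ ⟨l - 1, by omega⟩ / ∑ k, σ k ≠ 0 ∧
      Function.Injective ⇑(mixedD c ⟨0, by omega⟩ ⟨l - 1, by omega⟩ p) := by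
  obtain rfl : c = barycentricCost σ := funext hc
  have hS : 0 < ∑ k, σ k := sum_pos (fun i _ => hσ i) ⟨⟨0, by omega⟩, mem_univ _⟩
  have hfirst_ne_last : (⟨0, by omega⟩ : Fin l) ≠ ⟨l - 1, by omega⟩ := by
    rw [ne_eq, Fin.mk.injEq]
    omega
  have hcoeff : -2 * σ ⟨0, by omega⟩ * σ ⟨l - 1, by omega⟩ / ∑ k, σ k ≠ 0 := by
    have := hσ ⟨0, by omega⟩
    have := hσ ⟨l - 1, by omega⟩
    positivity
  rw [mixedD_barycentricCost hS.ne' hfirst_ne_last]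
  exact ⟨rfl, hcoeff, smul_right_injective _ hcoeff⟩
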